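/- arXiv:1407.0399 — 3 statements merged into one kernel-verified Lean document; each statement's English description precedes it below -/
import Mathlib

section
/- Let n ≥ 1 and let λ : ℍ → ℝ be a nonzero ℝ-linear functional on the quaternions that vanishes on the real quaternions (equivalently, a nonzero real-linear functional on the purely imaginary quaternions Im ℍ). Define the ℝ-bilinear form B on ℍⁿ (regarded as a real vector space of dimension 4n) by B(u,v) = λ( Im( Σ_{j=1}^{n} u_j · conj(v_j) ) ), where Im(q) denotes the purely imaginary part of the quaternion q. Then B is alternating and nondegenerate. -/
/-!
Since `λ` kills the reals, `B(u, v) = λ(∑ u_j conj(v_j))`, which is visibly bilinear. It vanishes on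
the diagonal because `u_j conj(u_j) = |u_j|²` is real. It is nondegenerate because `ℍ` is a
division ring: if `u_j ≠ 0` and `λ x ≠ 0`, the vector `v` supported at `j` with
`v_j = conj(u_j⁻¹ x)` gives `B(u, v) = λ x`.
-/

open Quaternion

theorem LinearMap.exists_map_mul_star_ne_zero {R A M : Type*} [Semiring R] [DivisionRing A]
    [InvolutiveStar A] [Module R A] [AddCommMonoid M] [Module R M] {lam : A →ₗ[R] M}
    (hlam : lam ≠ 0) {q : A} (hq : q ≠ 0) : ∃ p, lam (q * star p) ≠ 0 := by
  obtain ⟨x, hx⟩ := DFunLike.ne_iff.mp hlam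
  exact ⟨star (q⁻¹ * x), by rwa [star_star, ← mul_assoc, mul_inv_cancel₀ hq, one_mul]⟩

namespace Quaternion

variable {R ι : Type*} [Fintype ι]

theorem map_im_of_map_coe_eq_zero [CommRing R] {M : Type*} [AddCommGroup M] [Module R M]
    {lam : ℍ[R] →ₗ[R] M} (hre : ∀ r : R, lam r = 0) (q : ℍ[R]) : lam q.im = lam q := by
  conv_rhs => rw [← q.re_add_im, map_add, hre, zero_add]

def mulStarForm [CommRing R] (lam : ℍ[R] →ₗ[R] R) : LinearMap.BilinForm R (ι → ℍ[R]) :=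
  LinearMap.mk₂ R (fun u v => lam (∑ j, u j * star (v j)))
    (fun u u' v => by simp only [Pi.add_apply, add_mul, Finset.sum_add_distrib, map_add])
    (fun c u v => by simp only [Pi.smul_apply, smul_mul_assoc, ← Finset.smul_sum, map_smul])
    (fun u v v' => by simp only [Pi.add_apply, star_add, mul_add, Finset.sum_add_distrib, map_add])
    (fun c u v => by
      simp only [Pi.smul_apply, star_smul, mul_smul_comm, ← Finset.smul_sum, map_smul])

theorem mulStarForm_apply [CommRing R] (lam : ℍ[R] →ₗ[R] R) (u v : ι → ℍ[R]) :
    mulStarForm lam u v = lam (∑ j, u j * star (v j)) := rfl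

theorem mulStarForm_self [CommRing R] {lam : ℍ[R] →ₗ[R] R} (hre : ∀ r : R, lam r = 0)
    (u : ι → ℍ[R]) : mulStarForm lam u u = 0 := by
  simp only [mulStarForm_apply, self_mul_star, ← algebraMap_def, ← map_sum]
  exact hre _

theorem mulStarForm_nondegenerate [Field R] [LinearOrder R] [IsStrictOrderedRing R]
    [DecidableEq ι] {lam : ℍ[R] →ₗ[R] R} (hlam : lam ≠ 0) {u : ι → ℍ[R]}
    (hu : ∀ v, mulStarForm lam u v = 0) : u = 0 := by
  funext j
  by_contra hj
  obtain ⟨p, hp⟩ := lam.exists_map_mul_star_ne_zero hlam hj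
  apply hp
  simpa [mulStarForm_apply, Pi.single_apply, apply_ite star, mul_ite] using hu (Pi.single j p)

end Quaternion

theorem stmt7_general (n : ℕ)
    (lam : ℍ[ℝ] →ₗ[ℝ] ℝ) (hlam : lam ≠ 0)
    (hre : ∀ r : ℝ, lam (r : ℍ[ℝ]) = 0)
    (B : (Fin n → ℍ[ℝ]) → (Fin n → ℍ[ℝ]) → ℝ)
    (hB : ∀ u v, B u v = lam (Quaternion.im (∑ j : Fin n, u j * star (v j)))) :
    -- ℝ-bilinear
    (∀ (c : ℝ) (u u' v), B (c • u + u') v = c * B u v + B u' v) ∧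
    (∀ (c : ℝ) (u v v'), B u (c • v + v') = c * B u v + B u v') ∧
    -- alternating
    (∀ u, B u u = 0) ∧
    -- nondegenerate
    (∀ u, (∀ v, B u v = 0) → u = 0) := by
  have hB_eq : B = fun u v => mulStarForm lam u v := by
    funext u v
    rw [hB, map_im_of_map_coe_eq_zero hre, mulStarForm_apply]
  subst hB_eq
  refine ⟨fun c u u' v => ?_, fun c u v v' => ?_, mulStarForm_self hre,
    fun u => mulStarForm_nondegenerate hlam⟩
  · simp only [map_add, map_smul, LinearMap.add_apply, LinearMap.smul_apply, smul_eq_mul]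
  · simp only [map_add, map_smul, smul_eq_mul]

/-- For `n ≥ 1` and a nonzero ℝ-linear functional `λ` on the
quaternions vanishing on the real quaternions, the ℝ-bilinear form
`B(u,v) = λ(Im(Σ_j u_j · conj(v_j)))` on `ℍⁿ` (viewed as a real vector space
of dimension `4n`) is alternating and nondegenerate. -/
theorem stmt7 (n : ℕ) (hn : 1 ≤ n)
    (lam : ℍ[ℝ] →ₗ[ℝ] ℝ) (hlam : lam ≠ 0)
    (hre : ∀ r : ℝ, lam (r : ℍ[ℝ]) = 0)
    (B : (Fin n → ℍ[ℝ]) → (Fin n → ℍ[ℝ]) → ℝ)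
    (hB : ∀ u v, B u v = lam (Quaternion.im (∑ j : Fin n, u j * star (v j)))) :
    -- ℝ-bilinear
    (∀ (c : ℝ) (u u' v), B (c • u + u') v = c * B u v + B u' v) ∧
    (∀ (c : ℝ) (u v v'), B u (c • v + v') = c * B u v + B u v') ∧
    -- alternating
    (∀ u, B u u = 0) ∧
    -- nondegenerate
    (∀ u, (∀ v, B u v = 0) → u = 0) :=
  stmt7_general n lam hlam hre B hB
end

section
/- Let G be a locally compact Hausdorff topological group with a Haar measure μ that is both left-invariant and right-invariant, and let K be a compact subgroup of G. Suppose σ : G → G is a continuous group automorphism that preserves μ (μ(σ⁻¹(S)) = μ(S) for all Borel sets S) and satisfies: for every g ∈ G there exist k, k' ∈ K with σ(g) = k g⁻¹ k'. Then for all continuous compactly supported functions f, h : G → ℂ that are bi-K-invariant (f(k g k') = f(g) for all g ∈ G, k, k' ∈ K, and likewise for h), and for every x ∈ G, ∫_G f(y) h(y⁻¹ x) dμ(y) = ∫_G h(y) f(y⁻¹ x) dμ(y). In other words, convolution of bi-K-invariant functions is commutative, so (G,K) is a Gelfand pair. -/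
/-!
Since `σ(g) ∈ K g⁻¹ K`, on bi-`K`-invariant functions the automorphism `σ` acts as inversion.
A convolution `f ⋆ h` of bi-`K`-invariant functions is again bi-`K`-invariant, so
`(f ⋆ h)(x) = (f ⋆ h)(σ x⁻¹)`; substituting `y ↦ σ y` in the integral (legitimate since `σ`
preserves `μ`) turns this into `∫ f(y⁻¹) h(x y) dy`, which a left translation by `x⁻¹` identifies
with `(h ⋆ f)(x)`.
-/

open MeasureTheory

theorem MeasureTheory.MeasurePreserving.integral_comp_of_aestronglyMeasurable
    {α β E : Type*} [MeasurableSpace α] [MeasurableSpace β] [NormedAddCommGroup E]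
    [NormedSpace ℝ E] {μ : Measure α} {ν : Measure β} {φ : α → β}
    (hφ : MeasurePreserving φ μ ν) {g : β → E} (hg : AEStronglyMeasurable g ν) :
    ∫ x, g (φ x) ∂μ = ∫ y, g y ∂ν := by
  rw [← hφ.map_eq] at hg ⊢
  exact (integral_map hφ.measurable.aemeasurable hg).symm

section WeakSymmetry

variable {G E : Type*} [Group G]

def IsBiInvariant (K : Subgroup G) (f : G → E) : Prop :=
  ∀ g : G, ∀ k ∈ K, ∀ k' ∈ K, f (k * g * k') = f g

def IsWeakSymmetry (K : Subgroup G) (σ : G ≃* G) : Prop :=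
  ∀ g : G, ∃ k ∈ K, ∃ k' ∈ K, σ g = k * g⁻¹ * k'

namespace IsBiInvariant

variable {K : Subgroup G} {f : G → E}

theorem apply_mul_left (hf : IsBiInvariant K f) {k : G} (hk : k ∈ K) (g : G) :
    f (k * g) = f g := by
  simpa using hf g k hk 1 K.one_mem

theorem apply_mul_right (hf : IsBiInvariant K f) {k : G} (hk : k ∈ K) (g : G) :
    f (g * k) = f g := by
  simpa using hf g 1 K.one_mem k hk

theorem apply_weakSymmetry (hf : IsBiInvariant K f) {σ : G ≃* G} (hσ : IsWeakSymmetry K σ)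
    (g : G) : f (σ g) = f g⁻¹ := by
  obtain ⟨k, hk, k', hk', hg⟩ := hσ g
  rw [hg, hf g⁻¹ k hk k' hk']

end IsBiInvariant

section Convolution

variable [MeasurableSpace G] (μ : Measure G)

noncomputable def conv [NormedRing E] [NormedSpace ℝ E] (f h : G → E) (x : G) : E :=
  ∫ y, f y * h (y⁻¹ * x) ∂μ

variable {μ}

section NormedRing

variable [NormedRing E] [NormedSpace ℝ E]

theorem IsBiInvariant.conv [MeasurableMul G] [μ.IsMulLeftInvariant] {K : Subgroup G}
    {f h : G → E} (hf : IsBiInvariant K f) (hh : IsBiInvariant K h) :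
    IsBiInvariant K (_root_.conv μ f h) := by
  intro x k hk k' hk'
  calc _root_.conv μ f h (k * x * k')
      = ∫ y, f (k * y) * h ((k * y)⁻¹ * (k * x * k')) ∂μ :=
        (integral_mul_left_eq_self (fun y ↦ f y * h (y⁻¹ * (k * x * k'))) k).symm
    _ = _root_.conv μ f h x := by
        refine integral_congr_ae (Filter.Eventually.of_forall fun y ↦ ?_)
        have hy : (k * y)⁻¹ * (k * x * k') = y⁻¹ * x * k' := by group
        simp only [hy, hf.apply_mul_left hk, hh.apply_mul_right hk']

theorem conv_apply_weakSymmetry [TopologicalSpace G] [IsTopologicalGroup G] [BorelSpace G]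
    [SecondCountableTopology E] {K : Subgroup G} {σ : G ≃* G} (hσ : IsWeakSymmetry K σ)
    (hσμ : MeasurePreserving σ μ μ) {f h : G → E}
    (hfc : Continuous f) (hhc : Continuous h) (hfK : IsBiInvariant K f)
    (hhK : IsBiInvariant K h) (z : G) :
    conv μ f h (σ z) = ∫ y, f y⁻¹ * h (z⁻¹ * y) ∂μ := by
  have hcont : Continuous fun y ↦ f y * h (y⁻¹ * σ z) := by fun_prop
  rw [conv, ← hσμ.integral_comp_of_aestronglyMeasurable hcont.aestronglyMeasurable]
  congr 1 with y
  rw [← map_inv, ← map_mul, hfK.apply_weakSymmetry hσ, hhK.apply_weakSymmetry hσ, mul_inv_rev,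
    inv_inv]

end NormedRing

theorem integral_apply_inv_mul_apply_mul_eq_conv [NormedCommRing E] [NormedSpace ℝ E]
    [MeasurableMul G] [μ.IsMulLeftInvariant] (f h : G → E) (x : G) :
    ∫ y, f y⁻¹ * h (x * y) ∂μ = conv μ h f x := by
  rw [conv, ← integral_mul_left_eq_self _ x⁻¹]
  congr 1 with y
  rw [mul_inv_cancel_left, mul_inv_rev, inv_inv, mul_comm]

end Convolution

end WeakSymmetry

theorem stmt9_general {G : Type*} [Group G] [TopologicalSpace G] [IsTopologicalGroup G]
    [MeasurableSpace G] [BorelSpace G]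
    (μ : Measure G) [μ.IsHaarMeasure]
    (K : Subgroup G)
    (σ : G ≃* G) (hσc : Continuous σ)
    (hσμ : ∀ S : Set G, MeasurableSet S → μ (σ ⁻¹' S) = μ S)
    (hσ : ∀ g : G, ∃ k ∈ K, ∃ k' ∈ K, σ g = k * g⁻¹ * k')
    (f h : G → ℂ)
    (hfc : Continuous f)
    (hhc : Continuous h)
    (hfK : ∀ g : G, ∀ k ∈ K, ∀ k' ∈ K, f (k * g * k') = f g)
    (hhK : ∀ g : G, ∀ k ∈ K, ∀ k' ∈ K, h (k * g * k') = h g)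
    (x : G) :
    ∫ y, f y * h (y⁻¹ * x) ∂μ = ∫ y, h y * f (y⁻¹ * x) ∂μ := by
  have hσμ' : MeasurePreserving σ μ μ :=
    ⟨hσc.measurable, Measure.ext fun S hS ↦ by rw [Measure.map_apply hσc.measurable hS, hσμ S hS]⟩
  obtain ⟨k, hk, k', hk', hx⟩ := hσ x⁻¹
  calc conv μ f h x
      = conv μ f h (σ x⁻¹) := by rw [hx, inv_inv, IsBiInvariant.conv hfK hhK x k hk k' hk']
    _ = ∫ y, f y⁻¹ * h (x * y) ∂μ := by
        rw [conv_apply_weakSymmetry hσ hσμ' hfc hhc hfK hhK, inv_inv]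
    _ = conv μ h f x := integral_apply_inv_mul_apply_mul_eq_conv f h x

/-- **Selberg.** Let `G` be a locally compact Hausdorff group with
a bi-invariant Haar measure `μ`, `K` a compact subgroup, and `σ` a continuous,
measure-preserving automorphism of `G` with `σ(g) ∈ K g⁻¹ K` for every `g`.
Then convolution of continuous compactly supported bi-`K`-invariant functions
is commutative: `(G,K)` is a Gelfand pair. -/
theorem stmt9 {G : Type*} [Group G] [TopologicalSpace G] [IsTopologicalGroup G]
    [LocallyCompactSpace G] [T2Space G] [MeasurableSpace G] [BorelSpace G]
    (μ : Measure G) [μ.IsHaarMeasure] [μ.IsMulRightInvariant]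
    (K : Subgroup G) (hK : IsCompact (K : Set G))
    (σ : G ≃* G) (hσc : Continuous σ)
    (hσμ : ∀ S : Set G, MeasurableSet S → μ (σ ⁻¹' S) = μ S)
    (hσ : ∀ g : G, ∃ k ∈ K, ∃ k' ∈ K, σ g = k * g⁻¹ * k')
    (f h : G → ℂ)
    (hfc : Continuous f) (hfs : HasCompactSupport f)
    (hhc : Continuous h) (hhs : HasCompactSupport h)
    (hfK : ∀ g : G, ∀ k ∈ K, ∀ k' ∈ K, f (k * g * k') = f g)
    (hhK : ∀ g : G, ∀ k ∈ K, ∀ k' ∈ K, h (k * g * k') = h g)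
    (x : G) :
    ∫ y, f y * h (y⁻¹ * x) ∂μ = ∫ y, h y * f (y⁻¹ * x) ∂μ :=
  stmt9_general μ K σ hσc hσμ hσ f h hfc hhc hfK hhK x
end

section
/- Let n ≥ 1 and let G_n be the Heisenberg motion group: the set (ℂⁿ × ℝ) × U(n) with multiplication (z,t,k)(w,s,l) = (z + k·w, t + s + Im⟨z, k·w⟩, k l), where ⟨u,v⟩ = Σ_j u_j conj(v_j). Then: (i) this multiplication makes G_n a group with identity (0,0,I) and (z,t,k)⁻¹ = (−k⁻¹z, −t, k⁻¹); (ii) the map σ(z,t,k) = (conj(z), −t, conj(k)) (entrywise complex conjugation of the vector z and of the matrix k) is a group automorphism of G_n; and (iii) for every g = (z,t,k) ∈ G_n there exist u, v ∈ U(n) such that σ(g) = (0,0,u) · g⁻¹ · (0,0,v). Hence, with K = {(0,0,k) : k ∈ U(n)}, σ(g) ∈ K g⁻¹ K for all g ∈ G_n, i.e. (G_n, K) is a weakly symmetric pair. -/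
/-! The multiplication is that of the semidirect product `H_n ⋊ U(n)`: associativity reduces to the
`U(n)`-invariance of `⟨·,·⟩`, and `σ` is multiplicative because conjugation flips the sign of
`Im⟨z, w⟩`. For weak symmetry write `g = (z, t, k)`. Since `z` and `−conj z` have coordinates of
equal modulus, a diagonal unitary matrix of phases `w` satisfies `w z = −conj z`; then `u = w k` and
`v = w⁻¹ conj k` give `(0,0,u) g⁻¹ (0,0,v) = (conj z, −t, conj k) = σ(g)`. -/

/-- The underlying set of the Heisenberg motion group `G_n = (ℂⁿ × ℝ) × U(n)`. -/
abbrev HMG (n : ℕ) : Type := ((Fin n → ℂ) × ℝ) × Matrix.unitaryGroup (Fin n) ℂ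

open Matrix

section PhaseMatrices

variable {ι 𝕜 : Type*} [Fintype ι] [DecidableEq ι] [RCLike 𝕜]

lemma RCLike.exists_norm_eq_one_mul_eq {a b : 𝕜} (h : ‖a‖ = ‖b‖) :
    ∃ c : 𝕜, ‖c‖ = 1 ∧ c * a = b := by
  by_cases ha : a = 0
  · refine ⟨1, norm_one, ?_⟩
    rw [ha, mul_zero, eq_comm, ← norm_eq_zero, ← h, ha, norm_zero]
  · refine ⟨b / a, ?_, div_mul_cancel₀ b ha⟩
    rw [norm_div, ← h, div_self (norm_ne_zero_iff.mpr ha)]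

lemma Matrix.diagonal_mem_unitaryGroup {d : ι → 𝕜} (hd : ∀ i, ‖d i‖ = 1) :
    diagonal d ∈ unitaryGroup ι 𝕜 := by
  rw [mem_unitaryGroup_iff', star_eq_conjTranspose, diagonal_conjTranspose, diagonal_mul_diagonal,
    ← diagonal_one]
  congr 1
  funext i
  simp [RCLike.conj_mul, hd i]

lemma Matrix.exists_unitary_mulVec_eq_of_norm_eq {a b : ι → 𝕜} (h : ∀ i, ‖a i‖ = ‖b i‖) :
    ∃ u : unitaryGroup ι 𝕜, (u : Matrix ι ι 𝕜) *ᵥ a = b := by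
  choose d hd hda using fun i => RCLike.exists_norm_eq_one_mul_eq (h i)
  exact ⟨⟨diagonal d, diagonal_mem_unitaryGroup hd⟩, funext fun i => by
    simp [mulVec_diagonal, hda i]⟩

end PhaseMatrices

lemma Matrix.map_star_mulVec_star {m n α : Type*} [Fintype n] [CommSemiring α] [StarRing α]
    (M : Matrix m n α) (v : n → α) : M.map star *ᵥ star v = star (M *ᵥ v) := by
  rw [star_mulVec, ← mulVec_transpose]
  rfl

namespace Matrix.UnitaryGroup

variable {ι α : Type*} [Fintype ι] [DecidableEq ι] [CommRing α] [StarRing α]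

lemma mulVec_dotProduct_star_mulVec (U : unitaryGroup ι α) (a b : ι → α) :
    (U : Matrix ι ι α) *ᵥ a ⬝ᵥ star ((U : Matrix ι ι α) *ᵥ b) = a ⬝ᵥ star b := by
  rw [dotProduct_comm, star_mulVec, ← dotProduct_mulVec, mulVec_mulVec, ← star_eq_conjTranspose,
    star_mul_self, one_mulVec, dotProduct_comm]

lemma mulVec_inv_mulVec (U : unitaryGroup ι α) (v : ι → α) :
    (U : Matrix ι ι α) *ᵥ (((U⁻¹ : unitaryGroup ι α) : Matrix ι ι α) *ᵥ v) = v := by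
  rw [mulVec_mulVec, ← mul_val, mul_inv_cancel, one_val, one_mulVec]

lemma map_star_map_star (U : unitaryGroup ι α) : map_star (map_star U) = U :=
  Subtype.ext <| Matrix.ext fun _ _ => star_star _

lemma map_star_mul (U V : unitaryGroup ι α) : map_star (U * V) = map_star U * map_star V :=
  Subtype.ext <| Matrix.map_mul (f := starRingEnd α) (L := U.1) (M := V.1)

end Matrix.UnitaryGroup

open scoped ComplexOrder in
lemma Complex.im_dotProduct_star_self {ι : Type*} [Fintype ι] (z : ι → ℂ) :
    (z ⬝ᵥ star z).im = 0 :=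
  (Complex.nonneg_iff.mp (dotProduct_self_star_nonneg z)).2.symm

lemma Complex.im_star_dotProduct {ι : Type*} [Fintype ι] (a b : ι → ℂ) :
    (star a ⬝ᵥ b).im = -(a ⬝ᵥ star b).im := by
  rw [star_dotProduct, Complex.star_def, Complex.conj_im, dotProduct_comm]

namespace HMG

variable {n : ℕ}

def mul (g h : HMG n) : HMG n :=
  ((g.1.1 + (g.2 : Matrix (Fin n) (Fin n) ℂ) *ᵥ h.1.1,
    g.1.2 + h.1.2 + (g.1.1 ⬝ᵥ star ((g.2 : Matrix (Fin n) (Fin n) ℂ) *ᵥ h.1.1)).im), g.2 * h.2)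

def one : HMG n := ((0, 0), 1)

def inv (g : HMG n) : HMG n :=
  ((-(((g.2⁻¹ : unitaryGroup (Fin n) ℂ) : Matrix (Fin n) (Fin n) ℂ) *ᵥ g.1.1), -g.1.2), g.2⁻¹)

def conj (g : HMG n) : HMG n := ((star g.1.1, -g.1.2), UnitaryGroup.map_star g.2)

def ofUnitary (k : unitaryGroup (Fin n) ℂ) : HMG n := ((0, 0), k)

theorem mul_assoc (g g' g'' : HMG n) : mul (mul g g') g'' = mul g (mul g' g'') := by
  simp only [mul, UnitaryGroup.mul_val, ← mulVec_mulVec, Prod.mk.injEq, _root_.mul_assoc, and_true]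
  constructor
  · rw [mulVec_add, add_assoc]
  · simp only [mulVec_add, star_add, add_dotProduct, dotProduct_add,
      UnitaryGroup.mulVec_dotProduct_star_mulVec, Complex.add_im]
    ring

theorem one_mul (g : HMG n) : mul one g = g := by
  simp [mul, one]

theorem mul_one (g : HMG n) : mul g one = g := by
  simp [mul, one]

theorem mul_inv_cancel (g : HMG n) : mul g (inv g) = one := by
  simp only [mul, inv, one, mulVec_neg, UnitaryGroup.mulVec_inv_mulVec, star_neg, dotProduct_neg,
    Complex.neg_im, Complex.im_dotProduct_star_self, add_neg_cancel, _root_.mul_inv_cancel,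
    neg_zero, add_zero]

theorem inv_mul_cancel (g : HMG n) : mul (inv g) g = one := by
  simp only [mul, inv, one, neg_dotProduct, neg_add_cancel, Complex.neg_im,
    Complex.im_dotProduct_star_self, neg_zero, add_zero, _root_.inv_mul_cancel]

theorem conj_involutive : Function.Involutive (conj : HMG n → HMG n) := fun g => by
  simp only [conj, star_star, neg_neg, UnitaryGroup.map_star_map_star]

theorem conj_mul (g h : HMG n) : conj (mul g h) = mul (conj g) (conj h) := by
  simp only [conj, mul, star_add, neg_add, map_star_mulVec_star, star_star,
    Complex.im_star_dotProduct, UnitaryGroup.map_star_mul, UnitaryGroup.map_star_coe]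

theorem ofUnitary_mul (k : unitaryGroup (Fin n) ℂ) (g : HMG n) :
    mul (ofUnitary k) g = (((k : Matrix (Fin n) (Fin n) ℂ) *ᵥ g.1.1, g.1.2), k * g.2) := by
  simp [mul, ofUnitary]

theorem mul_ofUnitary (g : HMG n) (k : unitaryGroup (Fin n) ℂ) :
    mul g (ofUnitary k) = (g.1, g.2 * k) := by
  simp [mul, ofUnitary]

theorem exists_conj_eq_ofUnitary_mul_inv_mul_ofUnitary (g : HMG n) :
    ∃ u v : unitaryGroup (Fin n) ℂ, conj g = mul (mul (ofUnitary u) (inv g)) (ofUnitary v) := by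
  obtain ⟨⟨z, t⟩, k⟩ := g
  obtain ⟨w, hw⟩ : ∃ w : unitaryGroup (Fin n) ℂ, (w : Matrix (Fin n) (Fin n) ℂ) *ᵥ z = -star z :=
    exists_unitary_mulVec_eq_of_norm_eq fun i => by simp
  refine ⟨w * k, w⁻¹ * UnitaryGroup.map_star k, ?_⟩
  simp only [ofUnitary_mul, mul_ofUnitary, conj, inv, UnitaryGroup.mul_val, ← mulVec_mulVec,
    mulVec_neg, UnitaryGroup.mulVec_inv_mulVec, hw, neg_neg, Prod.mk.injEq, true_and]
  group

end HMG

theorem stmt12_general (n : ℕ)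
    (mul : HMG n → HMG n → HMG n)
    (hmul : ∀ g g' : HMG n,
      mul g g' =
        ((g.1.1 + (g.2 : Matrix (Fin n) (Fin n) ℂ).mulVec g'.1.1,
          g.1.2 + g'.1.2 +
            (∑ j : Fin n, g.1.1 j *
              (starRingEnd ℂ) ((g.2 : Matrix (Fin n) (Fin n) ℂ).mulVec g'.1.1 j)).im),
         g.2 * g'.2))
    (inv : HMG n → HMG n)
    (hinv : ∀ g : HMG n,
      inv g =
        ((-(((g.2⁻¹ : Matrix.unitaryGroup (Fin n) ℂ) :
              Matrix (Fin n) (Fin n) ℂ).mulVec g.1.1), -g.1.2), g.2⁻¹))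
    (σ : HMG n → HMG n)
    (hσ1 : ∀ g : HMG n, (σ g).1.1 = fun j => (starRingEnd ℂ) (g.1.1 j))
    (hσ2 : ∀ g : HMG n, (σ g).1.2 = -g.1.2)
    (hσ3 : ∀ g : HMG n, ((σ g).2 : Matrix (Fin n) (Fin n) ℂ)
      = ((g.2 : Matrix (Fin n) (Fin n) ℂ)).map (starRingEnd ℂ)) :
    -- (i) group structure
    (∀ g g' g'' : HMG n, mul (mul g g') g'' = mul g (mul g' g'')) ∧
    (∀ g : HMG n,
      mul (((0 : Fin n → ℂ), (0 : ℝ)), (1 : Matrix.unitaryGroup (Fin n) ℂ)) g = g) ∧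
    (∀ g : HMG n,
      mul g (((0 : Fin n → ℂ), (0 : ℝ)), (1 : Matrix.unitaryGroup (Fin n) ℂ)) = g) ∧
    (∀ g : HMG n,
      mul g (inv g) = (((0 : Fin n → ℂ), (0 : ℝ)), (1 : Matrix.unitaryGroup (Fin n) ℂ))) ∧
    (∀ g : HMG n,
      mul (inv g) g = (((0 : Fin n → ℂ), (0 : ℝ)), (1 : Matrix.unitaryGroup (Fin n) ℂ))) ∧
    -- (ii) `σ` is a group automorphism
    Function.Bijective σ ∧
    (∀ g g' : HMG n, σ (mul g g') = mul (σ g) (σ g')) ∧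
    -- (iii) weak symmetry: `σ(g) ∈ K g⁻¹ K`
    (∀ g : HMG n, ∃ u v : Matrix.unitaryGroup (Fin n) ℂ,
      σ g = mul (mul (((0 : Fin n → ℂ), (0 : ℝ)), u) (inv g))
                (((0 : Fin n → ℂ), (0 : ℝ)), v)) := by
  have hmul' : mul = HMG.mul := funext₂ hmul
  have hinv' : inv = HMG.inv := funext hinv
  have hσ' : σ = HMG.conj :=
    funext fun g => Prod.ext (Prod.ext (hσ1 g) (hσ2 g)) (Subtype.ext (hσ3 g))
  subst hmul' hinv' hσ'
  exact ⟨HMG.mul_assoc, HMG.one_mul, HMG.mul_one, HMG.mul_inv_cancel, HMG.inv_mul_cancel,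
    HMG.conj_involutive.bijective, HMG.conj_mul, HMG.exists_conj_eq_ofUnitary_mul_inv_mul_ofUnitary⟩

/-- The Heisenberg motion group `G_n = (ℂⁿ × ℝ) × U(n)` with
`(z,t,k)(w,s,l) = (z + k·w, t + s + Im⟨z, k·w⟩, kl)` is a group with identity
`(0,0,I)` and `(z,t,k)⁻¹ = (−k⁻¹z, −t, k⁻¹)`; the map
`σ(z,t,k) = (conj z, −t, conj k)` is a group automorphism of `G_n`; and for
every `g ∈ G_n` there are `u, v ∈ U(n)` with `σ(g) = (0,0,u)·g⁻¹·(0,0,v)`: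
with `K = {(0,0,k)}`, `(G_n, K)` is a weakly symmetric pair. -/
theorem stmt12 (n : ℕ) (hn : 1 ≤ n)
    (mul : HMG n → HMG n → HMG n)
    (hmul : ∀ g g' : HMG n,
      mul g g' =
        ((g.1.1 + (g.2 : Matrix (Fin n) (Fin n) ℂ).mulVec g'.1.1,
          g.1.2 + g'.1.2 +
            (∑ j : Fin n, g.1.1 j *
              (starRingEnd ℂ) ((g.2 : Matrix (Fin n) (Fin n) ℂ).mulVec g'.1.1 j)).im),
         g.2 * g'.2))
    (inv : HMG n → HMG n)
    (hinv : ∀ g : HMG n,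
      inv g =
        ((-(((g.2⁻¹ : Matrix.unitaryGroup (Fin n) ℂ) :
              Matrix (Fin n) (Fin n) ℂ).mulVec g.1.1), -g.1.2), g.2⁻¹))
    (σ : HMG n → HMG n)
    (hσ1 : ∀ g : HMG n, (σ g).1.1 = fun j => (starRingEnd ℂ) (g.1.1 j))
    (hσ2 : ∀ g : HMG n, (σ g).1.2 = -g.1.2)
    (hσ3 : ∀ g : HMG n, ((σ g).2 : Matrix (Fin n) (Fin n) ℂ)
      = ((g.2 : Matrix (Fin n) (Fin n) ℂ)).map (starRingEnd ℂ)) :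
    -- (i) group structure
    (∀ g g' g'' : HMG n, mul (mul g g') g'' = mul g (mul g' g'')) ∧
    (∀ g : HMG n,
      mul (((0 : Fin n → ℂ), (0 : ℝ)), (1 : Matrix.unitaryGroup (Fin n) ℂ)) g = g) ∧
    (∀ g : HMG n,
      mul g (((0 : Fin n → ℂ), (0 : ℝ)), (1 : Matrix.unitaryGroup (Fin n) ℂ)) = g) ∧
    (∀ g : HMG n,
      mul g (inv g) = (((0 : Fin n → ℂ), (0 : ℝ)), (1 : Matrix.unitaryGroup (Fin n) ℂ))) ∧
    (∀ g : HMG n,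
      mul (inv g) g = (((0 : Fin n → ℂ), (0 : ℝ)), (1 : Matrix.unitaryGroup (Fin n) ℂ))) ∧
    -- (ii) `σ` is a group automorphism
    Function.Bijective σ ∧
    (∀ g g' : HMG n, σ (mul g g') = mul (σ g) (σ g')) ∧
    -- (iii) weak symmetry: `σ(g) ∈ K g⁻¹ K`
    (∀ g : HMG n, ∃ u v : Matrix.unitaryGroup (Fin n) ℂ,
      σ g = mul (mul (((0 : Fin n → ℂ), (0 : ℝ)), u) (inv g))
                (((0 : Fin n → ℂ), (0 : ℝ)), v)) :=
  stmt12_general n mul hmul inv hinv σ hσ1 hσ2 hσ3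
end
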